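/- arXiv:2306.11835 — 2 statements merged into one kernel-verified Lean document; each statement's English description precedes it below -/
import Mathlib

section
/- In Euclidean space ℝⁿ, let x, y be two points, let m = (x+y)/2 be their midpoint, and let D be the set of points p with d(p, m) ≤ r lying in the hyperplane through m perpendicular to y − x. Then any continuous rectifiable path from x to y that does not intersect D has length strictly greater than 2·√((d(x,y)/2)² + r²). -/
/-!
A path from `x` to `y` crosses the perpendicular bisector of `[x, y]`: along the path the
distances to `x` and to `y` trade places, so they agree somewhere by the intermediate value
theorem. The crossing point `p` avoids `D`, so it lies at distance more than `r` from the
midpoint, and Pythagoras gives `dist p x = dist p y > √((dist x y / 2) ^ 2 + r ^ 2)`. The length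
of the path is at least `dist x p + dist p y`.
-/

open Set Metric

noncomputable def pathLength {V : Type*} [PseudoEMetricSpace V] {x y : V} (γ : Path x y) : ENNReal :=
  eVariationOn (fun t => γ t) Set.univ

noncomputable def pathInf {V : Type*} [PseudoEMetricSpace V] (K : Set V) (x y : V) : ENNReal :=
  ⨅ γ : {γ : Path x y // Set.range γ ⊆ K}, pathLength γ.1

noncomputable def rho {V : Type*} [PseudoEMetricSpace V] (K : Set V) (x y : V) : ENNReal :=
  pathInf K x y / 2

open AffineSubspace

theorem Path.exists_dist_eq {X : Type*} [PseudoMetricSpace X] {x y : X} (γ : Path x y) :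
    ∃ t, dist (γ t) x = dist (γ t) y :=
  intermediate_value_univ₂ (a := 0) (b := 1) (γ.continuous.dist continuous_const)
    (γ.continuous.dist continuous_const) (by simp) (by simp)

theorem edist_add_edist_le_pathLength {X : Type*} [PseudoEMetricSpace X] {x y : X}
    (γ : Path x y) (t : unitInterval) : edist x (γ t) + edist (γ t) y ≤ pathLength γ := by
  have hsplit := eVariationOn.Icc_add_Icc (fun s => γ s) unitInterval.nonneg'
    unitInterval.le_one' (mem_univ t)
  have hI : Icc (0 : unitInterval) 1 = univ := eq_univ_of_forall fun s => ⟨s.2.1, s.2.2⟩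
  rw [univ_inter, univ_inter, univ_inter, hI] at hsplit
  rw [pathLength, ← hsplit]
  gcongr
  · simpa using eVariationOn.edist_le (fun s => γ s) (left_mem_Icc.2 unitInterval.nonneg')
      (right_mem_Icc.2 unitInterval.nonneg')
  · simpa using eVariationOn.edist_le (fun s => γ s) (left_mem_Icc.2 unitInterval.le_one')
      (right_mem_Icc.2 unitInterval.le_one')

section Euclidean

variable {V P : Type*} [NormedAddCommGroup V] [InnerProductSpace ℝ V] [MetricSpace P]
  [NormedAddTorsor V P]

theorem dist_sq_eq_of_mem_perpBisector {x y p : P} (hp : p ∈ perpBisector x y) :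
    dist p x ^ 2 = dist p (midpoint ℝ x y) ^ 2 + (dist x y / 2) ^ 2 := by
  have hortho : inner ℝ (p -ᵥ midpoint ℝ x y) (midpoint ℝ x y -ᵥ x) = 0 := by
    rw [midpoint_vsub_left, real_inner_smul_right, mem_perpBisector_iff_inner_eq_zero.1 hp,
      mul_zero]
  rw [dist_eq_norm_vsub V, ← vsub_add_vsub_cancel p (midpoint ℝ x y) x,
    norm_add_sq_real, hortho, mul_zero, add_zero, ← dist_eq_norm_vsub, ← dist_eq_norm_vsub,
    dist_midpoint_left]
  rw [Real.norm_two]; ring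

theorem sqrt_lt_dist_of_mem_perpBisector {x y p : P} {r : ℝ} (hp : p ∈ perpBisector x y)
    (hr : 0 ≤ r) (hpr : r < dist p (midpoint ℝ x y)) :
    √((dist x y / 2) ^ 2 + r ^ 2) < dist p x := by
  rw [Real.sqrt_lt (by positivity) dist_nonneg, dist_sq_eq_of_mem_perpBisector hp, add_comm]
  gcongr

end Euclidean

theorem stmt3_general {n : ℕ} (x y : EuclideanSpace ℝ (Fin n))
    (r : ℝ) (hr : 0 < r)
    (D : Set (EuclideanSpace ℝ (Fin n)))
    (hD : D = {p | dist p (midpoint ℝ x y) ≤ r ∧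
      inner ℝ (p - midpoint ℝ x y) (y - x) = (0 : ℝ)})
    (γ : Path x y) (hγ : Set.range γ ∩ D = ∅) :
    ENNReal.ofReal (2 * Real.sqrt ((dist x y / 2) ^ 2 + r ^ 2)) < pathLength γ := by
  obtain ⟨t, hxt⟩ := γ.exists_dist_eq
  have hp : γ t ∈ perpBisector x y := mem_perpBisector_iff_dist_eq.2 hxt
  have hpr : r < dist (γ t) (midpoint ℝ x y) := by
    by_contra! hle
    have hpD : γ t ∈ D := hD ▸ ⟨hle, mem_perpBisector_iff_inner_eq_zero.1 hp⟩
    exact (eq_empty_iff_forall_notMem.1 hγ) (γ t) ⟨mem_range_self t, hpD⟩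
  have hx := sqrt_lt_dist_of_mem_perpBisector hp hr.le hpr
  calc ENNReal.ofReal (2 * √((dist x y / 2) ^ 2 + r ^ 2))
      < ENNReal.ofReal (dist x (γ t) + dist (γ t) y) := by
        rw [ENNReal.ofReal_lt_ofReal_iff_of_nonneg (by positivity), dist_comm x (γ t), ← hxt]
        linarith
    _ = edist x (γ t) + edist (γ t) y := by
        rw [ENNReal.ofReal_add dist_nonneg dist_nonneg, ← edist_dist, ← edist_dist]
    _ ≤ pathLength γ := edist_add_edist_le_pathLength γ t

theorem stmt3 {n : ℕ} (hn : 1 ≤ n) (x y : EuclideanSpace ℝ (Fin n)) (hxy : x ≠ y)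
    (r : ℝ) (hr : 0 < r)
    (D : Set (EuclideanSpace ℝ (Fin n)))
    (hD : D = {p | dist p (midpoint ℝ x y) ≤ r ∧
      inner ℝ (p - midpoint ℝ x y) (y - x) = (0 : ℝ)})
    (γ : Path x y) (hγ : Set.range γ ∩ D = ∅) :
    ENNReal.ofReal (2 * Real.sqrt ((dist x y / 2) ^ 2 + r ^ 2)) < pathLength γ :=
  stmt3_general x y r hr D hD γ hγ
end

section
/- Under the hypotheses of the K-perturbation lemma (bijection f : X → X' with K-paths of length ≤ κ joining x to f(x)), the parallax edge sets satisfy the interleaving: if edge (x,y) ∈ P_{α,ε}(X), then edge (f(x), f(y)) ∈ P_{α+κ, ε+2κ}(X'), where P_{α,ε}(X) = {(x,y) ∈ X×X : ρ_K(x,y) ≤ α and ρ_K(x,y) ≤ ρ_V(x,y) + ε}. -/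
open Set Metric

/-!
Prepending a `K`-path from `f x` back to `x` and appending one from `y` to `f y` turns any `K`-path
from `x` to `y` into a `K`-path from `f x` to `f y` that is longer by at most `2κ`, so `ρ_K` grows by
at most `κ`; the triangle inequality shows likewise that `ρ_V` shrinks by at most `κ`. Both defining
inequalities of the parallax edge set then survive with `α` raised by `κ` and `ε` by `2κ`.
-/

section PathLength

variable {V : Type*} [PseudoEMetricSpace V] {x y z : V}

lemma pathLength_eq_eVariationOn_extend (γ : Path x y) :
    pathLength γ = eVariationOn γ.extend (Icc 0 1) := by
  have hγ : (fun t : unitInterval => γ t) = γ.extend ∘ Subtype.val :=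
    funext fun t => (γ.extend_extends' t).symm
  rw [pathLength, hγ, eVariationOn.comp_eq_of_monotoneOn _ _ ((Subtype.mono_coe _).monotoneOn _),
    image_univ, Subtype.range_coe]

lemma pathLength_symm (γ : Path x y) : pathLength γ.symm = pathLength γ := by
  rw [pathLength_eq_eVariationOn_extend, pathLength_eq_eVariationOn_extend, Path.extend_symm,
    ← Function.comp_def, eVariationOn.comp_eq_of_antitoneOn _ _ (fun _ _ _ _ h => by linarith),
    image_const_sub_Icc, sub_zero, sub_self]

lemma pathLength_trans (γ : Path x y) (δ : Path y z) :
    pathLength (γ.trans δ) = pathLength γ + pathLength δ := by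
  have hγ : eVariationOn (γ.trans δ).extend (univ ∩ Icc 0 (1 / 2)) = pathLength γ := by
    rw [eVariationOn.eq_of_eqOn (f' := γ.extend ∘ (2 * ·))
        (fun t ht => Path.extend_trans_of_le_half γ δ ht.2.2),
      eVariationOn.comp_eq_of_monotoneOn _ _ (fun _ _ _ _ h => by linarith), univ_inter,
      image_mul_left_Icc' two_pos, pathLength_eq_eVariationOn_extend]
    norm_num
  have hδ : eVariationOn (γ.trans δ).extend (univ ∩ Icc (1 / 2) 1) = pathLength δ := by
    rw [eVariationOn.eq_of_eqOn (f' := δ.extend ∘ (2 * · + -1))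
        (fun t ht => by simpa [← sub_eq_add_neg] using Path.extend_trans_of_half_le γ δ ht.2.1),
      eVariationOn.comp_eq_of_monotoneOn _ _ (fun _ _ _ _ h => by linarith), univ_inter,
      image_affine_Icc' two_pos, pathLength_eq_eVariationOn_extend]
    norm_num
  rw [pathLength_eq_eVariationOn_extend, ← hγ, ← hδ,
    eVariationOn.Icc_add_Icc _ (by norm_num) (by norm_num) (mem_univ _), univ_inter]

lemma edist_le_pathLength (γ : Path x y) : edist x y ≤ pathLength γ := by
  simpa [pathLength] using eVariationOn.edist_le (fun t => γ t) (mem_univ 0) (mem_univ 1)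

end PathLength

section PathInf

variable {V : Type*} [PseudoEMetricSpace V] {K : Set V} {x y x' y' : V}

lemma pathInf_le_pathLength (γ : Path x y) (hγ : range γ ⊆ K) : pathInf K x y ≤ pathLength γ :=
  iInf_le (fun γ : {γ : Path x y // range γ ⊆ K} => pathLength γ.1) ⟨γ, hγ⟩

lemma pathInf_le_pathLength_add_pathInf_add (γ : Path x x') (δ : Path y y')
    (hγ : range γ ⊆ K) (hδ : range δ ⊆ K) :
    pathInf K x' y' ≤ pathLength γ + pathInf K x y + pathLength δ := by
  have hη : ∀ η : {η : Path x y // range η ⊆ K},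
      pathInf K x' y' ≤ pathLength γ + pathLength η.1 + pathLength δ := fun η =>
    calc pathInf K x' y' ≤ pathLength (γ.symm.trans (η.1.trans δ)) := by
          refine pathInf_le_pathLength _ ?_
          rw [Path.trans_range, Path.symm_range, Path.trans_range]
          exact union_subset hγ (union_subset η.2 hδ)
      _ = pathLength γ + pathLength η.1 + pathLength δ := by
          rw [pathLength_trans, pathLength_trans, pathLength_symm, add_assoc]
  calc pathInf K x' y' ≤ ⨅ η : {η : Path x y // range η ⊆ K},
        (pathLength γ + pathLength η.1 + pathLength δ) := le_iInf hη
    _ = pathLength γ + pathInf K x y + pathLength δ := by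
        rw [pathInf, ENNReal.add_iInf, ENNReal.iInf_add]

lemma edist_le_pathLength_add_edist_add (γ : Path x x') (δ : Path y y') :
    edist x y ≤ pathLength γ + edist x' y' + pathLength δ :=
  calc edist x y ≤ edist x x' + edist x' y' + edist y' y := edist_triangle4 _ _ _ _
    _ ≤ pathLength γ + edist x' y' + pathLength δ := by
        rw [edist_comm y']
        gcongr <;> exact edist_le_pathLength _

lemma rho_le_rho_add {c : ENNReal} (γ : Path x x') (δ : Path y y')
    (hγ : range γ ⊆ K) (hδ : range δ ⊆ K) (hγc : pathLength γ ≤ c) (hδc : pathLength δ ≤ c) :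
    rho K x' y' ≤ rho K x y + c :=
  calc rho K x' y' ≤ (c + pathInf K x y + c) / 2 := by
        unfold rho
        gcongr
        exact (pathInf_le_pathLength_add_pathInf_add γ δ hγ hδ).trans (by gcongr)
    _ = rho K x y + c := by
        rw [rho, ENNReal.add_div, ENNReal.add_div, add_right_comm, ENNReal.add_halves, add_comm]

lemma edist_div_two_le_add {c : ENNReal} (γ : Path x x') (δ : Path y y')
    (hγc : pathLength γ ≤ c) (hδc : pathLength δ ≤ c) :
    edist x y / 2 ≤ edist x' y' / 2 + c :=
  calc edist x y / 2 ≤ (c + edist x' y' + c) / 2 := by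
        gcongr
        exact (edist_le_pathLength_add_edist_add γ δ).trans (by gcongr)
    _ = edist x' y' / 2 + c := by
        rw [ENNReal.add_div, ENNReal.add_div, add_right_comm, ENNReal.add_halves, add_comm]

end PathInf

theorem stmt12_general {V : Type*} [MetricSpace V]
    (K X : Set V)
    (f : V → V) (κ : ℝ) (hκ : 0 ≤ κ)
    (hf : ∀ x ∈ X, ∃ γ : Path x (f x), Set.range γ ⊆ K ∧ pathLength γ ≤ ENNReal.ofReal κ)
    (α ε : ℝ) (hα : 0 ≤ α) (hε : 0 ≤ ε)
    (x y : V) (hx : x ∈ X) (hy : y ∈ X)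
    (h1 : rho K x y ≤ ENNReal.ofReal α)
    (h2 : rho K x y ≤ edist x y / 2 + ENNReal.ofReal ε) :
    rho K (f x) (f y) ≤ ENNReal.ofReal (α + κ) ∧
      rho K (f x) (f y) ≤ edist (f x) (f y) / 2 + ENNReal.ofReal (ε + 2 * κ) := by
  obtain ⟨γ, hγK, hγκ⟩ := hf x hx
  obtain ⟨δ, hδK, hδκ⟩ := hf y hy
  have hrho := rho_le_rho_add γ δ hγK hδK hγκ hδκ
  have hedist := edist_div_two_le_add γ δ hγκ hδκ
  rw [ENNReal.ofReal_add hα hκ, ENNReal.ofReal_add hε (by positivity), two_mul,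
    ENNReal.ofReal_add hκ hκ]
  constructor
  · exact hrho.trans (by gcongr)
  · calc rho K (f x) (f y) ≤ edist x y / 2 + ENNReal.ofReal ε + ENNReal.ofReal κ :=
          hrho.trans (by gcongr)
      _ ≤ edist (f x) (f y) / 2 + ENNReal.ofReal κ + ENNReal.ofReal ε + ENNReal.ofReal κ := by
          gcongr
      _ = edist (f x) (f y) / 2 + (ENNReal.ofReal ε + (ENNReal.ofReal κ + ENNReal.ofReal κ)) := by
          ring

theorem stmt12 {V : Type*} [MetricSpace V]
    (hgeo : ∀ x y : V, ∃ γ : Path x y, pathLength γ = edist x y)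
    (K X X' : Set V) (hXK : X ⊆ K) (hX'K : X' ⊆ K) (hX : X.Finite) (hX' : X'.Finite)
    (f : V → V) (hbij : Set.BijOn f X X') (κ : ℝ) (hκ : 0 ≤ κ)
    (hf : ∀ x ∈ X, ∃ γ : Path x (f x), Set.range γ ⊆ K ∧ pathLength γ ≤ ENNReal.ofReal κ)
    (α ε : ℝ) (hα : 0 ≤ α) (hε : 0 ≤ ε)
    (x y : V) (hx : x ∈ X) (hy : y ∈ X)
    (h1 : rho K x y ≤ ENNReal.ofReal α)
    (h2 : rho K x y ≤ edist x y / 2 + ENNReal.ofReal ε) :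
    rho K (f x) (f y) ≤ ENNReal.ofReal (α + κ) ∧
      rho K (f x) (f y) ≤ edist (f x) (f y) / 2 + ENNReal.ofReal (ε + 2 * κ) :=
  stmt12_general K X f κ hκ hf α ε hα hε x y hx hy h1 h2
end
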